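/- arXiv:1608.01689 — 2 statements merged into one kernel-verified Lean document; each statement's English description precedes it below -/
import Mathlib

section
/- Let (X_u) be pairwise independent indicators indexed by vertices of a graph, with Pr[X_u=1] = p(u), and suppose each p(u) ≤ 1/4 and for every u in a set W, Σ_{w ∈ N(u)} p(w) ≤ 1/2 (u is light). If Σ_{u ∈ W} p(u) ∈ [1/40, 1/4], then the probability that there exists u ∈ W such that X_u = 1, X_w = 0 for all w ∈ N(u), and X_{u'} = 0 for all u' ∈ W \ {u}, is at least 1/160. -/
open Finset

/-- The probability of an event `E` under a weight function `w` on a finite sample space. -/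
noncomputable def Pr {Ω : Type*} [Fintype Ω] (w : Ω → ℝ) (E : Ω → Prop) : ℝ :=
  ∑ ω : Ω, Set.indicator {ω' | E ω'} w ω

lemma Pr_eq {Ω : Type*} [Fintype Ω] (w : Ω → ℝ) (E : Ω → Prop) [DecidablePred E] :
    Pr w E = ∑ ω : Ω, if E ω then w ω else 0 := by
  unfold Pr
  refine Finset.sum_congr rfl fun ω _ => ?_
  simp [Set.indicator_apply, Set.mem_setOf_eq]

/-- Pairwise independent marking indicators with `p u ≤ 1/4` and all `u ∈ W` light
(`∑_{w ∈ N(u)} p w ≤ 1/2`): if `∑_{u ∈ W} p u ∈ [1/40, 1/4]`, then with probability at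
least `1/160` there is `u ∈ W` that is marked, with no neighbor of `u` marked and no other
element of `W` marked. -/
theorem stmt2 {Ω V : Type*} [Fintype Ω] [Fintype V] [DecidableEq V] (w : Ω → ℝ)
    (hw0 : ∀ ω, 0 ≤ w ω) (hw1 : ∑ ω, w ω = 1)
    (G : SimpleGraph V) [DecidableRel G.Adj]
    (p : V → ℝ) (hp0 : ∀ u, 0 ≤ p u) (hp1 : ∀ u, p u ≤ 1/4)
    (X : V → Ω → Prop)
    (hmarg : ∀ u, Pr w (X u) = p u)
    (hpair : ∀ u u', u ≠ u' → Pr w (fun ω => X u ω ∧ X u' ω) = p u * p u')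
    (W : Finset V)
    (hlight : ∀ u ∈ W, ∑ x ∈ G.neighborFinset u, p x ≤ 1/2)
    (hWlb : 1/40 ≤ ∑ u ∈ W, p u) (hWub : ∑ u ∈ W, p u ≤ 1/4) :
    1/160 ≤ Pr w (fun ω => ∃ u ∈ W, X u ω ∧ (∀ x ∈ G.neighborFinset u, ¬ X x ω) ∧
      ∀ u' ∈ W, u' ≠ u → ¬ X u' ω) := by
  classical
  set E : V → Ω → Prop := fun u ω => X u ω ∧ (∀ x ∈ G.neighborFinset u, ¬ X x ω) ∧
      (∀ u' ∈ W, u' ≠ u → ¬ X u' ω) with hE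
  -- Step 1: disjointness gives sum bound
  have h1 : ∑ u ∈ W, Pr w (E u) ≤ Pr w (fun ω => ∃ u ∈ W, E u ω) := by
    simp only [Pr_eq]
    rw [Finset.sum_comm]
    refine Finset.sum_le_sum fun ω _ => ?_
    by_cases h : ∃ u ∈ W, E u ω
    · obtain ⟨u0, hu0, hE0⟩ := h
      rw [if_pos ⟨u0, hu0, hE0⟩]
      have hsum : ∑ u ∈ W, (if E u ω then w ω else 0)
          = ∑ u ∈ W, (if u = u0 then w ω else 0) := by
        refine Finset.sum_congr rfl fun u hu => ?_
        by_cases hEu : E u ω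
        · have huu0 : u = u0 := by
            by_contra hne
            exact hE0.2.2 u hu hne hEu.1
          rw [if_pos hEu, if_pos huu0]
        · have hne : u ≠ u0 := fun h => hEu (h ▸ hE0)
          simp [hEu, hne]
      rw [hsum, Finset.sum_ite_eq' W u0 (fun _ => w ω), if_pos hu0]
    · have hz : ∀ u ∈ W, (if E u ω then w ω else 0) = 0 := fun u hu =>
        if_neg fun hEu => h ⟨u, hu, hEu⟩
      rw [Finset.sum_eq_zero hz]
      split <;> [exact hw0 ω; exact le_refl 0]
  -- Step 2: per-vertex lower bound
  have h2 : ∀ u ∈ W, p u / 4 ≤ Pr w (E u) := by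
    intro u hu
    have key : Pr w (X u) - (∑ x ∈ G.neighborFinset u, Pr w (fun ω => X u ω ∧ X x ω))
        - (∑ u' ∈ W.erase u, Pr w (fun ω => X u ω ∧ X u' ω)) ≤ Pr w (E u) := by
      simp only [Pr_eq]
      rw [Finset.sum_comm (s := G.neighborFinset u), Finset.sum_comm (s := W.erase u),
        ← Finset.sum_sub_distrib, ← Finset.sum_sub_distrib]
      refine Finset.sum_le_sum fun ω _ => ?_
      have hB0 : (0:ℝ) ≤ ∑ x ∈ G.neighborFinset u, (if X u ω ∧ X x ω then w ω else 0) :=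
        Finset.sum_nonneg fun x _ => by split <;> [exact hw0 ω; exact le_refl 0]
      have hC0 : (0:ℝ) ≤ ∑ u' ∈ W.erase u, (if X u ω ∧ X u' ω then w ω else 0) :=
        Finset.sum_nonneg fun x _ => by split <;> [exact hw0 ω; exact le_refl 0]
      by_cases hXu : X u ω
      · by_cases hEu : E u ω
        · rw [if_pos hXu, if_pos hEu]; linarith
        · rw [if_pos hXu, if_neg hEu]
          have hbad : (∃ x ∈ G.neighborFinset u, X x ω) ∨ ∃ u' ∈ W.erase u, X u' ω := by
            by_contra hc
            push_neg at hc
            exact hEu ⟨hXu, fun x hx => hc.1 x hx,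
              fun u' hu' hne => hc.2 u' (Finset.mem_erase.mpr ⟨hne, hu'⟩)⟩
          rcases hbad with ⟨x, hx, hXx⟩ | ⟨u', hu', hXu'⟩
          · have hle : w ω ≤ ∑ x' ∈ G.neighborFinset u,
                (if X u ω ∧ X x' ω then w ω else 0) := by
              have := Finset.single_le_sum
                (f := fun x' => if X u ω ∧ X x' ω then w ω else 0)
                (fun x' _ => by split <;> [exact hw0 ω; exact le_refl 0]) hx
              simpa [hXu, hXx] using this
            linarith
          · have hle : w ω ≤ ∑ x' ∈ W.erase u,
                (if X u ω ∧ X x' ω then w ω else 0) := by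
              have := Finset.single_le_sum
                (f := fun x' => if X u ω ∧ X x' ω then w ω else 0)
                (fun x' _ => by split <;> [exact hw0 ω; exact le_refl 0]) hu'
              simpa [hXu, hXu'] using this
            linarith
      · rw [if_neg hXu]
        have : (0:ℝ) ≤ if E u ω then w ω else 0 := by
          split <;> [exact hw0 ω; exact le_refl 0]
        linarith
    have hmargu := hmarg u
    have hB : ∑ x ∈ G.neighborFinset u, Pr w (fun ω => X u ω ∧ X x ω)
        = p u * ∑ x ∈ G.neighborFinset u, p x := by
      rw [Finset.mul_sum]
      refine Finset.sum_congr rfl fun x hx => ?_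
      exact hpair u x ((G.mem_neighborFinset u x).mp hx).ne
    have hC : ∑ u' ∈ W.erase u, Pr w (fun ω => X u ω ∧ X u' ω)
        = p u * ∑ u' ∈ W.erase u, p u' := by
      rw [Finset.mul_sum]
      refine Finset.sum_congr rfl fun u' hu' => ?_
      exact hpair u u' (Ne.symm (Finset.mem_erase.mp hu').1)
    have hNB : ∑ x ∈ G.neighborFinset u, p x ≤ 1/2 := hlight u hu
    have hCW : ∑ u' ∈ W.erase u, p u' ≤ 1/4 :=
      le_trans (Finset.sum_le_sum_of_subset_of_nonneg (Finset.erase_subset u W)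
        (fun i _ _ => hp0 i)) hWub
    rw [hmargu, hB, hC] at key
    nlinarith [hp0 u, key]
  calc (1:ℝ)/160 ≤ ∑ u ∈ W, p u / 4 := by rw [← Finset.sum_div]; linarith
    _ ≤ ∑ u ∈ W, Pr w (E u) := Finset.sum_le_sum h2
    _ ≤ Pr w (fun ω => ∃ u ∈ W, E u ω) := h1
    _ = _ := rfl
end

section
/- Fix real α ∈ (0,1) and a sequence of phases t = 0, 1, 2, .... Suppose in each phase t there is a set V_t of 'golden' nodes, each node v ∈ V_t has an age age_t(v) ∈ ℕ (the number of prior golden phases of v), and the set of removed golden nodes V_{t,1} ⊆ V_t satisfies Σ_{v ∈ V_{t,1}} (1/(1−α))^{age_t(v)} ≥ α · Σ_{v ∈ V_t} (1/(1−α))^{age_t(v)}. Then there exists a fractional charging scheme assigning to each surviving node v at the end of phase t a disjoint 'bag' of removed-node mass b_t(v) ≥ (1/(1−α))^{age_t(v)}, with total mass conserved. Consequently, any node with age at least log_{1/(1−α)} Δ has a bag of size at least Δ, and the number of such surviving nodes is at most n/Δ (where n is the total number of nodes). -/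
open Finset
open scoped Classical

/-- Age-based fractional charging (Lemma on bags): given golden sets `V t`, removed sets
`R t ⊆ V t` (pairwise disjoint over phases), ages counting prior golden phases, and the
weighted-removal guarantee
`∑_{v ∈ R t} (1/(1−α))^{age t v} ≥ α · ∑_{v ∈ V t} (1/(1−α))^{age t v}` for every phase
`t < T`, there is a fractional charging scheme assigning to every node surviving all `T`
phases a bag of mass at least `(1/(1−α))^{age T v}`, with total mass at most `n`.
Consequently every surviving node of age at least `log_{1/(1−α)} Δ` has a bag of mass at
least `Δ`, and the number of such surviving nodes is at most `n/Δ`. -/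
theorem stmt6 {Node : Type*} [Fintype Node]
    (α : ℝ) (hα : α ∈ Set.Ioo (0 : ℝ) 1) (T : ℕ)
    (V R : ℕ → Finset Node)
    (hRV : ∀ t, R t ⊆ V t)
    (hdisj : ∀ s t, s ≠ t → Disjoint (R s) (R t))
    (age : ℕ → Node → ℕ)
    (hage : ∀ t v, age t v = ((Finset.range t).filter (fun s => v ∈ V s)).card)
    (hrem : ∀ t < T,
      α * ∑ v ∈ V t, (1/(1-α))^(age t v) ≤ ∑ v ∈ R t, (1/(1-α))^(age t v)) :
    ∃ b : Node → ℝ,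
      (∀ v, 0 ≤ b v) ∧
      (∀ v, (∀ t < T, v ∉ R t) → (1/(1-α))^(age T v) ≤ b v) ∧
      (∑ v, b v ≤ Fintype.card Node) ∧
      ∀ Δ : ℕ, 0 < Δ →
        (∀ v, (∀ t < T, v ∉ R t) → Real.logb (1/(1-α)) Δ ≤ (age T v : ℝ) → (Δ:ℝ) ≤ b v) ∧
        ((Finset.univ.filter (fun v =>
            (∀ t < T, v ∉ R t) ∧ Real.logb (1/(1-α)) Δ ≤ (age T v : ℝ))).card : ℝ)
          ≤ (Fintype.card Node : ℝ) / Δ := by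
  obtain ⟨hα0, hα1⟩ := hα
  set β : ℝ := 1/(1-α) with hβdef
  have h1α : (0:ℝ) < 1 - α := by linarith
  have hβ1 : 1 < β := by
    rw [hβdef]
    rw [lt_div_iff₀ h1α]; linarith
  have hβ0 : (0:ℝ) < β := lt_trans one_pos hβ1
  -- survivors up to phase t
  set S : ℕ → Finset Node := fun t => Finset.univ.filter (fun v => ∀ s < t, v ∉ R s) with hS
  -- age increments by 1 on V t
  have hageSucc : ∀ t v, age (t+1) v = age t v + (if v ∈ V t then 1 else 0) := by
    intro t v
    rw [hage, hage, Finset.range_add_one, Finset.filter_insert]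
    by_cases h : v ∈ V t
    · simp [h, Finset.card_insert_of_notMem (fun hh => (Finset.mem_range.mp (Finset.mem_filter.mp hh).1).false)]
    · simp [h]
  -- key invariant
  have key : ∀ t ≤ T, ∑ v ∈ S t, β ^ (age t v) ≤ (Fintype.card Node : ℝ) := by
    intro t
    induction t with
    | zero =>
      intro _
      have hage0 : ∀ v, age 0 v = 0 := fun v => by simp [hage]
      calc ∑ v ∈ S 0, β ^ (age 0 v) = ∑ v ∈ S 0, 1 := by
            refine Finset.sum_congr rfl fun v _ => by rw [hage0 v]; simp
        _ = (S 0).card := by simp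
        _ ≤ (Fintype.card Node : ℝ) := by
            exact_mod_cast Finset.card_le_card (Finset.subset_univ _) |>.trans_eq (Finset.card_univ)
    | succ t ih =>
      intro ht
      have htT : t < T := ht
      have ihT := ih (le_of_lt htT)
      -- S (t+1) = S t \ R t
      have hSsucc : S (t+1) = S t \ R t := by
        ext v
        simp only [hS, Finset.mem_filter, Finset.mem_univ, true_and, Finset.mem_sdiff]
        constructor
        · intro h
          exact ⟨fun s hs => h s (hs.trans (Nat.lt_succ_self t)), h t (Nat.lt_succ_self t)⟩
        · rintro ⟨h1, h2⟩ s hs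
          rcases Nat.lt_succ_iff_lt_or_eq.mp hs with hs' | rfl
          · exact h1 s hs'
          · exact h2
      -- R t ⊆ S t
      have hRS : R t ⊆ S t := by
        intro v hv
        simp only [hS, Finset.mem_filter, Finset.mem_univ, true_and]
        intro s hs hvs
        exact Finset.disjoint_left.mp (hdisj s t (Nat.ne_of_lt hs)) hvs hv
      have hRSV : R t ⊆ S t ∩ V t := fun v hv =>
        Finset.mem_inter.mpr ⟨hRS hv, hRV t hv⟩
      have hpos : ∀ v, (0:ℝ) ≤ β ^ (age t v) := fun v => le_of_lt (pow_pos hβ0 _)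
      -- split sum over S (t+1)
      have hsplit : ∑ v ∈ S (t+1), β ^ (age (t+1) v)
          = ∑ v ∈ (S (t+1)) ∩ V t, β * β ^ (age t v)
            + ∑ v ∈ (S (t+1)) \ V t, β ^ (age t v) := by
        rw [← Finset.sum_inter_add_sum_sdiff (S (t+1)) (V t)]
        congr 1
        · refine Finset.sum_congr rfl fun v hv => ?_
          have : v ∈ V t := (Finset.mem_inter.mp hv).2
          rw [hageSucc, if_pos this, pow_succ]; ring
        · refine Finset.sum_congr rfl fun v hv => ?_
          have : v ∉ V t := (Finset.mem_sdiff.mp hv).2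
          rw [hageSucc, if_neg this, add_zero]
      -- S(t+1) ∩ V t = (S t ∩ V t) \ R t
      have hinter : (S (t+1)) ∩ V t = (S t ∩ V t) \ R t := by
        rw [hSsucc]
        ext v
        simp only [Finset.mem_inter, Finset.mem_sdiff]
        tauto
      have hsub : ∑ v ∈ (S (t+1)) ∩ V t, β ^ (age t v)
          = ∑ v ∈ S t ∩ V t, β ^ (age t v) - ∑ v ∈ R t, β ^ (age t v) := by
        rw [hinter, eq_sub_iff_add_eq, Finset.sum_sdiff_eq_sub hRSV, sub_add_cancel]
      -- the removal bound
      have hV : ∑ v ∈ S t ∩ V t, β ^ (age t v) ≤ ∑ v ∈ V t, β ^ (age t v) :=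
        Finset.sum_le_sum_of_subset_of_nonneg (Finset.inter_subset_right)
          (fun v _ _ => hpos v)
      have hremt : α * ∑ v ∈ S t ∩ V t, β ^ (age t v) ≤ ∑ v ∈ R t, β ^ (age t v) :=
        le_trans (by nlinarith [hrem t htT]) (le_refl _)
      have hβα : β * (1 - α) = 1 := by
        rw [hβdef]; field_simp
      have hmain : β * ∑ v ∈ (S (t+1)) ∩ V t, β ^ (age t v)
          ≤ ∑ v ∈ S t ∩ V t, β ^ (age t v) := by
        rw [hsub]
        set A := ∑ v ∈ S t ∩ V t, β ^ (age t v)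
        set B := ∑ v ∈ R t, β ^ (age t v)
        have hx : β * (A - B) ≤ β * (A - α*A) :=
          mul_le_mul_of_nonneg_left (by linarith) hβ0.le
        have hy : β * (A - α*A) = A := by
          rw [show A - α*A = (1-α)*A by ring, ← mul_assoc, hβα, one_mul]
        linarith
      have hdiffsub : ∑ v ∈ (S (t+1)) \ V t, β ^ (age t v)
          ≤ ∑ v ∈ (S t) \ V t, β ^ (age t v) := by
        refine Finset.sum_le_sum_of_subset_of_nonneg ?_ (fun v _ _ => hpos v)
        rw [hSsucc]
        intro v hv
        simp only [Finset.mem_sdiff] at hv ⊢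
        exact ⟨hv.1.1, hv.2⟩
      calc ∑ v ∈ S (t+1), β ^ (age (t+1) v)
          = β * ∑ v ∈ (S (t+1)) ∩ V t, β ^ (age t v)
            + ∑ v ∈ (S (t+1)) \ V t, β ^ (age t v) := by
            rw [hsplit, Finset.mul_sum]
        _ ≤ ∑ v ∈ S t ∩ V t, β ^ (age t v) + ∑ v ∈ (S t) \ V t, β ^ (age t v) :=
            add_le_add hmain hdiffsub
        _ = ∑ v ∈ S t, β ^ (age t v) := Finset.sum_inter_add_sum_sdiff _ _ _
        _ ≤ (Fintype.card Node : ℝ) := ihT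
  -- define b
  refine ⟨fun v => if (∀ t < T, v ∉ R t) then β ^ (age T v) else 0, ?_, ?_, ?_, ?_⟩
  · intro v
    by_cases h : ∀ t < T, v ∉ R t
    · dsimp only; rw [if_pos h]; exact le_of_lt (pow_pos hβ0 _)
    · dsimp only; rw [if_neg h]
  · intro v hv
    dsimp only; rw [if_pos hv]
  · have : ∑ v, (if (∀ t < T, v ∉ R t) then β ^ (age T v) else 0)
        = ∑ v ∈ S T, β ^ (age T v) := by
      rw [hS, Finset.sum_filter]
    rw [this]
    exact key T le_rfl
  · intro Δ hΔ
    have hΔβ : ∀ v, Real.logb β Δ ≤ (age T v : ℝ) → (Δ:ℝ) ≤ β ^ (age T v) := by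
      intro v hv
      have hΔpos : (0:ℝ) < Δ := by exact_mod_cast hΔ
      have h1 : (Δ:ℝ) = β ^ (Real.logb β Δ) :=
        (Real.rpow_logb hβ0 (ne_of_gt hβ1) hΔpos).symm
      calc (Δ:ℝ) = β ^ (Real.logb β Δ) := h1
        _ ≤ β ^ ((age T v : ℝ)) := Real.rpow_le_rpow_left_iff hβ1 |>.mpr hv
        _ = β ^ (age T v) := by rw [Real.rpow_natCast]
    constructor
    · intro v hv hlog
      dsimp only; rw [if_pos hv]
      exact hΔβ v hlog
    · set F := Finset.univ.filter (fun v =>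
        (∀ t < T, v ∉ R t) ∧ Real.logb β Δ ≤ (age T v : ℝ)) with hF
      have hcard : (Δ:ℝ) * F.card ≤ (Fintype.card Node : ℝ) := by
        have h1 : (Δ:ℝ) * F.card = ∑ _v ∈ F, (Δ:ℝ) := by
          rw [Finset.sum_const, nsmul_eq_mul, mul_comm]
        have h2 : ∑ _v ∈ F, (Δ:ℝ) ≤ ∑ v ∈ F, β ^ (age T v) := by
          refine Finset.sum_le_sum fun v hv => ?_
          have := (Finset.mem_filter.mp hv).2
          exact hΔβ v this.2
        have h3 : ∑ v ∈ F, β ^ (age T v) ≤ ∑ v ∈ S T, β ^ (age T v) := by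
          refine Finset.sum_le_sum_of_subset_of_nonneg ?_
            (fun v _ _ => le_of_lt (pow_pos hβ0 _))
          intro v hv
          have := (Finset.mem_filter.mp hv)
          simp only [hS, Finset.mem_filter, Finset.mem_univ, true_and]
          exact this.2.1
        linarith [key T le_rfl]
      have hΔpos : (0:ℝ) < Δ := by exact_mod_cast hΔ
      rw [le_div_iff₀ hΔpos]
      linarith [hcard]
end
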